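/- Let z ∈ (0, 1) and take the five-point scheme with σ = 0 and τ = −(1 − z²)/12. Let Φ : ℤ → ℝ be square-summable over j ≤ 0 and satisfy the type-1 second-order extrapolation conditions (ΔΦ)₀ = 0 and (D₀ΔΦ)₀ = 0 (these determine the ghost values Φ₁ = 2Φ₀ − Φ_{−1} and Φ₂ = 4Φ₀ − 4Φ_{−1} + Φ_{−2}). Define Ψ_j := (A(z)Φ)_j for j ≤ 0. Then ∑_{j ≤ −1} Ψ_j² + (1/2)·Ψ₀² ≤ ∑_{j ≤ −1} Φ_j² + (1/2)·Φ₀²; that is, the scheme with this boundary closure is semi-bounded for the weighted norm with weight 1/2 at j = 0. -/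

import Mathlib

/-- Backward difference `(DΦ)_j = Φ_j - Φ_{j-1}`. -/
noncomputable def Dd (Φ : ℤ → ℝ) (j : ℤ) : ℝ := Φ j - Φ (j - 1)

/-- Centered difference `(D₀Φ)_j = (Φ_{j+1} - Φ_{j-1})/2`. -/
noncomputable def D0 (Φ : ℤ → ℝ) (j : ℤ) : ℝ := (Φ (j + 1) - Φ (j - 1)) / 2

/-- Discrete Laplacian `(ΔΦ)_j = Φ_{j-1} - 2Φ_j + Φ_{j+1}`. -/
noncomputable def Lap (Φ : ℤ → ℝ) (j : ℤ) : ℝ := Φ (j - 1) - 2 * Φ j + Φ (j + 1)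

/-- `(DΔΦ)_j = (ΔΦ)_j - (ΔΦ)_{j-1}`. -/
noncomputable def DLap (Φ : ℤ → ℝ) (j : ℤ) : ℝ := Lap Φ j - Lap Φ (j - 1)

/-- `(D₀ΔΦ)_j = (-Φ_{j-2} + 2Φ_{j-1} - 2Φ_{j+1} + Φ_{j+2})/2`. -/
noncomputable def D0Lap (Φ : ℤ → ℝ) (j : ℤ) : ℝ :=
  (-Φ (j - 2) + 2 * Φ (j - 1) - 2 * Φ (j + 1) + Φ (j + 2)) / 2

/-- `(Δ²Φ)_j = Φ_{j-2} - 4Φ_{j-1} + 6Φ_j - 4Φ_{j+1} + Φ_{j+2}`. -/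
noncomputable def Lap2 (Φ : ℤ → ℝ) (j : ℤ) : ℝ :=
  Φ (j - 2) - 4 * Φ (j - 1) + 6 * Φ j - 4 * Φ (j + 1) + Φ (j + 2)

/-- The five point scheme `A(z)Φ = Φ - z D₀Φ + (z²/2) ΔΦ + σ D₀ΔΦ + τ Δ²Φ`. -/
noncomputable def A5 (z σ τ : ℝ) (Φ : ℤ → ℝ) (j : ℤ) : ℝ :=
  Φ j - z * D0 Φ j + z ^ 2 / 2 * Lap Φ j + σ * D0Lap Φ j + τ * Lap2 Φ j

/-!
Energy method. For `τ = -(1 - z²)/12` the local energy loss `Φ_j² - Ψ_j²` of one step splits into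
a dissipation term, `(1 - z²)` times a sum of squares of discrete Laplacians, plus the increment
`F_j - F_{j+1}` of a quadratic flux. Summing over `-N ≤ j ≤ -1` telescopes the fluxes to
`F_{-N} - F_0`. The extrapolation conditions express the ghost values through `Φ₀, Φ_{-1}, Φ_{-2}`,
and then `F_0` equals half the energy loss at `j = 0` minus a nonnegative multiple of `z`; this is
where the weight `1/2` comes from. Square summability makes `F_{-N} → 0`.
-/

open Filter Topology Finset

/-- Evaluated at `Φ_{j-2}, Φ_{j-1}, Φ_j, Φ_{j+1}`; the coefficients are solved for from
`sq_sub_sq_A5_eq`. -/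
noncomputable def fluxForm (z a b c d : ℝ) : ℝ :=
  -(1 - z ^ 2) ^ 2 / 72 * a ^ 2
  + (1 / 12 + z / 12 - z ^ 2 / 12 - z ^ 3 / 12) * (a * b)
  + (1 - z ^ 2) ^ 2 / 12 * (a * c)
  + (1 / 36 - z / 12 + z ^ 2 / 36 + z ^ 3 / 12 - z ^ 4 / 18) * (a * d)
  + (-5 / 24 - z / 3 - 7 * z ^ 2 / 24 - z ^ 3 / 6) * b ^ 2
  + (-1 / 12 - 5 * z / 12 + z ^ 2 / 12 + 5 * z ^ 3 / 12) * (b * c)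
  + (z ^ 2 - 1) / 12 * (b * d)
  + (3 / 8 - z / 3 + z ^ 2 / 4 - z ^ 3 / 6 - z ^ 4 / 8) * c ^ 2
  + (-1 / 4 + z / 12 + z ^ 2 / 12 - z ^ 3 / 12 + z ^ 4 / 6) * (c * d)
  + (5 / 72 - z ^ 2 / 72 - z ^ 4 / 18) * d ^ 2

noncomputable def flux (z : ℝ) (Φ : ℤ → ℝ) (j : ℤ) : ℝ :=
  fluxForm z (Φ (j - 2)) (Φ (j - 1)) (Φ j) (Φ (j + 1))

noncomputable def dissipation (z : ℝ) (Φ : ℤ → ℝ) (j : ℤ) : ℝ :=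
  (1 - z ^ 2) / 144 *
    ((6 + 9 * z ^ 2) * (Lap Φ j + Lap Φ (j + 1)) ^ 2
      + (2 + z ^ 2) * (Lap Φ (j + 1) - Lap Φ j) ^ 2
      + (1 - z ^ 2) * (Lap Φ (j + 1) - Lap Φ (j - 1)) ^ 2)

theorem sq_sub_sq_A5_eq (z : ℝ) (Φ : ℤ → ℝ) (j : ℤ) :
    Φ j ^ 2 - A5 z 0 (-(1 - z ^ 2) / 12) Φ j ^ 2
      = dissipation z Φ j + (flux z Φ j - flux z Φ (j + 1)) := by
  simp only [A5, D0, Lap, D0Lap, Lap2, dissipation, flux, fluxForm,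
    show j + 1 - 2 = j - 1 by ring, show j + 1 - 1 = j by ring, show j + 1 + 1 = j + 2 by ring,
    show j - 1 - 1 = j - 2 by ring, show j - 1 + 1 = j by ring]
  ring

theorem dissipation_nonneg {z : ℝ} (hz : z ^ 2 ≤ 1) (Φ : ℤ → ℝ) (j : ℤ) :
    0 ≤ dissipation z Φ j := by
  have h : 0 ≤ 1 - z ^ 2 := by linarith
  unfold dissipation
  positivity

theorem flux_zero_eq_of_extrapolation (z : ℝ) {Φ : ℤ → ℝ} (hext1 : Lap Φ 0 = 0)
    (hext2 : D0Lap Φ 0 = 0) :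
    flux z Φ 0 = (Φ 0 ^ 2 - A5 z 0 (-(1 - z ^ 2) / 12) Φ 0 ^ 2) / 2
        - z / 2 * ((z * Φ (-1) + (1 - z) * Φ 0) ^ 2 + Φ 0 ^ 2) := by
  simp only [Lap, D0Lap] at hext1 hext2
  norm_num at hext1 hext2
  have hΦ1 : Φ 1 = 2 * Φ 0 - Φ (-1) := by linarith
  have hΦ2 : Φ 2 = 4 * Φ 0 - 4 * Φ (-1) + Φ (-2) := by linarith
  simp only [A5, D0, Lap, D0Lap, Lap2, flux, fluxForm]
  norm_num [hΦ1, hΦ2]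
  ring

theorem flux_zero_le_of_extrapolation {z : ℝ} (hz : 0 ≤ z) {Φ : ℤ → ℝ} (hext1 : Lap Φ 0 = 0)
    (hext2 : D0Lap Φ 0 = 0) :
    flux z Φ 0 ≤ (Φ 0 ^ 2 - A5 z 0 (-(1 - z ^ 2) / 12) Φ 0 ^ 2) / 2 := by
  rw [flux_zero_eq_of_extrapolation z hext1 hext2]
  have : 0 ≤ z / 2 * ((z * Φ (-1) + (1 - z) * Φ 0) ^ 2 + Φ 0 ^ 2) := by positivity
  linarith

theorem sum_range_sq_A5_le {z : ℝ} (hz0 : 0 ≤ z) (hz1 : z ^ 2 ≤ 1) {Φ : ℤ → ℝ}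
    (hext1 : Lap Φ 0 = 0) (hext2 : D0Lap Φ 0 = 0) (N : ℕ) :
    ∑ n ∈ range N, A5 z 0 (-(1 - z ^ 2) / 12) Φ (-n - 1) ^ 2
        + 1 / 2 * A5 z 0 (-(1 - z ^ 2) / 12) Φ 0 ^ 2
      ≤ ∑ n ∈ range N, Φ (-n - 1) ^ 2 + 1 / 2 * Φ 0 ^ 2 - flux z Φ (-N) := by
  have htelescope : ∑ n ∈ range N, (Φ (-n - 1) ^ 2 - A5 z 0 (-(1 - z ^ 2) / 12) Φ (-n - 1) ^ 2)
      = ∑ n ∈ range N, dissipation z Φ (-n - 1) + (flux z Φ (-N) - flux z Φ 0) := by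
    have hsum := sum_range_sub (fun n : ℕ => flux z Φ (-n)) N
    rw [Nat.cast_zero, neg_zero] at hsum
    rw [← hsum, ← sum_add_distrib]
    refine sum_congr rfl fun n _ => ?_
    rw [sq_sub_sq_A5_eq, sub_add_cancel, Nat.cast_succ, neg_add']
  have hdiss : 0 ≤ ∑ n ∈ range N, dissipation z Φ (-n - 1) :=
    sum_nonneg fun n _ => dissipation_nonneg hz1 Φ _
  rw [sum_sub_distrib] at htelescope
  linarith [flux_zero_le_of_extrapolation hz0 hext1 hext2]

theorem tendsto_atBot_zero_of_summable_sq {Φ : ℤ → ℝ}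
    (hΦ : Summable fun j : {j : ℤ // j ≤ 0} => Φ j.1 ^ 2) : Tendsto Φ atBot (𝓝 0) := by
  have hind : Summable ((Set.Iic 0).indicator fun j => Φ j ^ 2) :=
    summable_subtype_iff_indicator.mp hΦ
  have hsq : Tendsto (fun j => Φ j ^ 2) atBot (𝓝 0) := by
    refine (hind.tendsto_cofinite_zero.mono_left atBot_le_cofinite).congr' ?_
    filter_upwards [eventually_le_atBot 0] with j hj
    exact Set.indicator_of_mem (Set.mem_Iic.mpr hj) fun j => Φ j ^ 2
  have habs := hsq.sqrt
  simp only [Real.sqrt_sq_eq_abs, Real.sqrt_zero] at habs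
  exact (tendsto_zero_iff_abs_tendsto_zero Φ).mpr habs

theorem tendsto_flux_atBot (z : ℝ) {Φ : ℤ → ℝ} (hΦ : Tendsto Φ atBot (𝓝 0)) :
    Tendsto (flux z Φ) atBot (𝓝 0) := by
  have hshift (k : ℤ) : Tendsto (fun j => Φ (j + k)) atBot (𝓝 0) :=
    hΦ.comp (tendsto_atBot_add_const_right _ k tendsto_id)
  have hcont : Continuous fun p : ℝ × ℝ × ℝ × ℝ => fluxForm z p.1 p.2.1 p.2.2.1 p.2.2.2 := by
    unfold fluxForm; fun_prop
  have hcomp : flux z Φ = (fun p : ℝ × ℝ × ℝ × ℝ => fluxForm z p.1 p.2.1 p.2.2.1 p.2.2.2) ∘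
      fun j => (Φ (j + -2), Φ (j + -1), Φ (j + 0), Φ (j + 1)) := by
    funext j
    simp only [flux, Function.comp_apply, sub_eq_add_neg, add_zero]
  rw [hcomp]
  convert (hcont.tendsto _).comp
    ((hshift (-2)).prodMk_nhds ((hshift (-1)).prodMk_nhds ((hshift 0).prodMk_nhds (hshift 1))))
  simp [fluxForm]

theorem tsum_add_le_of_sum_range_le {a b e : ℕ → ℝ} {c d : ℝ} (ha : ∀ n, 0 ≤ a n)
    (hb : Summable b) (he : Tendsto e atTop (𝓝 0))
    (h : ∀ N, ∑ n ∈ range N, a n + c ≤ ∑ n ∈ range N, b n + d - e N) :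
    ∑' n, a n + c ≤ ∑' n, b n + d := by
  have hrhs := (hb.hasSum.tendsto_sum_nat.add_const d).sub he
  rw [sub_zero] at hrhs
  obtain ⟨M, hM⟩ := hrhs.bddAbove_range
  rw [mem_upperBounds, Set.forall_mem_range] at hM
  have ha_sum : Summable a :=
    summable_of_sum_range_le (c := M - c) ha fun N => by linarith [h N, hM N]
  exact le_of_tendsto_of_tendsto' (ha_sum.hasSum.tendsto_sum_nat.add_const c) hrhs h

def natEquivIntLeNegOne : ℕ ≃ {j : ℤ // j ≤ -1} where
  toFun n := ⟨-n - 1, by omega⟩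
  invFun j := (-j.1 - 1).toNat
  left_inv n := by simp
  right_inv j := by ext; simp only; omega

theorem tsum_subtype_le_neg_one (f : ℤ → ℝ) :
    ∑' j : {j : ℤ // j ≤ -1}, f j.1 = ∑' n : ℕ, f (-n - 1) :=
  (natEquivIntLeNegOne.tsum_eq fun j => f j.1).symm

theorem summable_comp_neg_sub_one {f : ℤ → ℝ}
    (hf : Summable fun j : {j : ℤ // j ≤ 0} => f j.1) : Summable fun n : ℕ => f (-n - 1) := by
  have hle (n : ℕ) : -(n : ℤ) - 1 ≤ 0 := by omega
  let i : ℕ → {j : ℤ // j ≤ 0} := fun n => ⟨-n - 1, hle n⟩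
  have hi : Function.Injective i := fun m n hmn => by
    have := congrArg Subtype.val hmn
    simp only [i] at this
    omega
  simpa only [Function.comp_def, i] using hf.comp_injective hi

/-- Semi-boundedness of the five point scheme with `σ = 0`, `τ = -(1 - z²)/12`
under the type-1 second order extrapolation conditions `(ΔΦ)₀ = (D₀ΔΦ)₀ = 0`. -/
theorem five_point_LF_like_type1_extrapolation (z : ℝ) (hz : z ∈ Set.Ioo (0 : ℝ) 1)
    (Φ : ℤ → ℝ) (hΦ : Summable (fun j : {j : ℤ // j ≤ 0} => (Φ j.1) ^ 2))
    (hext1 : Lap Φ 0 = 0) (hext2 : D0Lap Φ 0 = 0) :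
    (∑' j : {j : ℤ // j ≤ -1}, (A5 z 0 (-(1 - z ^ 2) / 12) Φ j.1) ^ 2)
        + 1 / 2 * (A5 z 0 (-(1 - z ^ 2) / 12) Φ 0) ^ 2
      ≤ (∑' j : {j : ℤ // j ≤ -1}, (Φ j.1) ^ 2) + 1 / 2 * (Φ 0) ^ 2 := by
  obtain ⟨hz0, hz1⟩ := hz
  have hsummable : Summable fun n : ℕ => Φ (-n - 1) ^ 2 :=
    summable_comp_neg_sub_one (f := fun j => Φ j ^ 2) hΦ
  have hflux : Tendsto (fun N : ℕ => flux z Φ (-N)) atTop (𝓝 0) :=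
    (tendsto_flux_atBot z (tendsto_atBot_zero_of_summable_sq hΦ)).comp
      (tendsto_neg_atTop_atBot.comp tendsto_natCast_atTop_atTop)
  rw [tsum_subtype_le_neg_one fun j => A5 z 0 (-(1 - z ^ 2) / 12) Φ j ^ 2,
    tsum_subtype_le_neg_one fun j => Φ j ^ 2]
  exact tsum_add_le_of_sum_range_le (fun n => sq_nonneg _) hsummable hflux
    (sum_range_sq_A5_le hz0.le (by nlinarith) hext1 hext2)
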